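/- Let a < b, let a = s_0 < s_1 < ⋯ < s_{n+1} = b be a partition with Δ_j = s_j − s_{j−1} > 0, let f : ℝ → ℝ be measurable, and let m ∈ ℝ, constants c_1, …, c_{n+1} with c_j ≥ m, and r_1, …, r_{n+1} > 0 be such that c_j ≤ f(s) ≤ c_j + r_j for all s ∈ [s_{j−1}, s_j]. Then exp(−∑_{j=1}^{n+1} Δ_j (c_j − m)) · ∏_{j=1}^{n+1} [ ∑_{k=0}^∞ (e^{−r_j Δ_j} (r_j Δ_j)^k / k!) · ( (1/Δ_j) ∫_{s_{j−1}}^{s_j} (1 − (f(s) − c_j)/r_j) ds )^k ] = exp( − ∫_a^b (f(s) − m) ds ). -/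
import Mathlib

open MeasureTheory

lemma poisson_mixture_tsum (x q : ℝ) :
    (∑' k : ℕ, (Real.exp (-x) * x ^ k / (Nat.factorial k)) * q ^ k)
      = Real.exp (-x) * Real.exp (x * q) := by
  have h : ∀ k : ℕ, (Real.exp (-x) * x ^ k / (Nat.factorial k)) * q ^ k
      = Real.exp (-x) * ((x * q) ^ k / (Nat.factorial k)) := by
    intro k; rw [mul_pow]; ring
  simp only [h]
  rw [tsum_mul_left]
  congr 1
  rw [Real.exp_eq_exp_ℝ, NormedSpace.exp_eq_tsum_div]

/-- Acceptance probability of the layered rejection sampler over a partition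
`a = s_0 < s_1 < ⋯ < s_{n+1} = b`: the product of the uniform-threshold factor and the
per-subinterval Poisson-mixture factors equals `exp(−∫_a^b (f(s) − m) ds)`. -/
theorem layered_rejection_acceptance (a b : ℝ) (hab : a < b) (n : ℕ)
    (s : Fin (n + 2) → ℝ) (hs0 : s 0 = a) (hslast : s (Fin.last (n + 1)) = b)
    (hmono : ∀ j : Fin (n + 1), s j.castSucc < s j.succ)
    (f : ℝ → ℝ) (hf : Measurable f) (m : ℝ)
    (c r : Fin (n + 1) → ℝ)
    (hc : ∀ j, m ≤ c j) (hr : ∀ j, 0 < r j)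
    (hbound : ∀ j : Fin (n + 1), ∀ t ∈ Set.Icc (s j.castSucc) (s j.succ),
      c j ≤ f t ∧ f t ≤ c j + r j) :
    Real.exp (-∑ j : Fin (n + 1), (s j.succ - s j.castSucc) * (c j - m)) *
      ∏ j : Fin (n + 1),
        (∑' k : ℕ, (Real.exp (-(r j * (s j.succ - s j.castSucc))) *
            (r j * (s j.succ - s j.castSucc)) ^ k / (Nat.factorial k)) *
          ((1 / (s j.succ - s j.castSucc)) *
            ∫ t in (s j.castSucc)..(s j.succ), (1 - (f t - c j) / r j)) ^ k)
      = Real.exp (-∫ t in a..b, (f t - m)) := by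
  -- integrability of f on each subinterval
  have hint : ∀ j : Fin (n + 1), IntervalIntegrable f volume (s j.castSucc) (s j.succ) := by
    intro j
    have hle := (hmono j).le
    rw [intervalIntegrable_iff_integrableOn_Ioc_of_le hle]
    refine ⟨hf.aestronglyMeasurable.restrict, ?_⟩
    apply MeasureTheory.HasFiniteIntegral.of_bounded (C := |c j| + r j)
    filter_upwards [ae_restrict_mem measurableSet_Ioc] with t ht
    have hb := hbound j t (Set.Ioc_subset_Icc_self ht)
    rw [Real.norm_eq_abs, abs_le]
    constructor
    · nlinarith [abs_nonneg (c j), neg_abs_le (c j), (hr j).le]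
    · nlinarith [le_abs_self (c j)]
  -- compute each tsum factor
  have hfactor : ∀ j : Fin (n + 1),
      (∑' k : ℕ, (Real.exp (-(r j * (s j.succ - s j.castSucc))) *
            (r j * (s j.succ - s j.castSucc)) ^ k / (Nat.factorial k)) *
          ((1 / (s j.succ - s j.castSucc)) *
            ∫ t in (s j.castSucc)..(s j.succ), (1 - (f t - c j) / r j)) ^ k)
        = Real.exp (-((∫ t in (s j.castSucc)..(s j.succ), f t)
            - (s j.succ - s j.castSucc) * c j)) := by
    intro j
    set Δ : ℝ := s j.succ - s j.castSucc with hΔ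
    have hΔpos : 0 < Δ := sub_pos.mpr (hmono j)
    rw [poisson_mixture_tsum, ← Real.exp_add]
    congr 1
    have hI : (∫ t in (s j.castSucc)..(s j.succ), (1 - (f t - c j) / r j))
        = Δ - (1 / r j) * ((∫ t in (s j.castSucc)..(s j.succ), f t) - Δ * c j) := by
      have h1 : IntervalIntegrable (fun t => (f t - c j) / r j) volume
          (s j.castSucc) (s j.succ) := ((hint j).sub (intervalIntegrable_const)).div_const _
      rw [intervalIntegral.integral_sub intervalIntegrable_const h1]
      have h2 : (∫ t in (s j.castSucc)..(s j.succ), (f t - c j) / r j)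
          = ((∫ t in (s j.castSucc)..(s j.succ), f t) - Δ * c j) / r j := by
        simp only [div_eq_mul_inv]
        rw [intervalIntegral.integral_mul_const,
          intervalIntegral.integral_sub (hint j) intervalIntegrable_const]
        simp [hΔ, mul_comm]
      rw [h2]
      simp
      ring
    rw [hI]
    have hrne : r j ≠ 0 := (hr j).ne'
    have hΔne : Δ ≠ 0 := hΔpos.ne'
    field_simp
    ring
  rw [Finset.prod_congr rfl fun j _ => hfactor j, ← Real.exp_sum, ← Real.exp_add]
  congr 1
  -- telescoping: sum of integrals and sum of lengths
  set aseq : ℕ → ℝ := fun i => if h : i < n + 2 then s ⟨i, h⟩ else b with haseq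
  have hjlt : ∀ j : Fin (n + 1), (j : ℕ) < n + 2 :=
    fun j => Nat.lt_of_lt_of_le j.isLt (Nat.le_succ _)
  have hcast : ∀ j : Fin (n + 1), s j.castSucc = aseq j ∧ s j.succ = aseq (j + 1) := by
    intro j
    constructor
    · show s j.castSucc = if h : (j : ℕ) < n + 2 then s ⟨j, h⟩ else b
      rw [dif_pos (hjlt j)]
      rfl
    · show s j.succ = if h : (j : ℕ) + 1 < n + 2 then s ⟨(j : ℕ) + 1, h⟩ else b
      rw [dif_pos (Nat.succ_lt_succ j.isLt)]
      rfl
  have hint' : ∀ k < n + 1, IntervalIntegrable f volume (aseq k) (aseq (k + 1)) := by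
    intro k hk
    have := hint ⟨k, hk⟩
    rwa [(hcast ⟨k, hk⟩).1, (hcast ⟨k, hk⟩).2] at this
  have ha0 : aseq 0 = a := by
    show (if h : (0:ℕ) < n + 2 then s ⟨0, h⟩ else b) = a
    rw [dif_pos (by omega : (0:ℕ) < n + 2), ← hs0]
    rfl
  have han : aseq (n + 1) = b := by
    show (if h : n + 1 < n + 2 then s ⟨n + 1, h⟩ else b) = b
    rw [dif_pos (by omega : n + 1 < n + 2), ← hslast]
    rfl
  have hsumI : ∑ j : Fin (n + 1), (∫ t in (s j.castSucc)..(s j.succ), f t)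
      = ∫ t in a..b, f t := by
    have h1 : ∀ j : Fin (n + 1), (∫ t in (s j.castSucc)..(s j.succ), f t)
        = ∫ t in (aseq j)..(aseq (j + 1)), f t := fun j => by
      rw [(hcast j).1, (hcast j).2]
    rw [Finset.sum_congr rfl fun j _ => h1 j,
      Fin.sum_univ_eq_sum_range (fun i => ∫ t in (aseq i)..(aseq (i + 1)), f t) (n + 1),
      intervalIntegral.sum_integral_adjacent_intervals hint', ha0, han]
  have hsumD : ∑ j : Fin (n + 1), (s j.succ - s j.castSucc) = b - a := by
    have h1 : ∀ j : Fin (n + 1), s j.succ - s j.castSucc = aseq (j + 1) - aseq j :=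
      fun j => by rw [(hcast j).1, (hcast j).2]
    rw [Finset.sum_congr rfl fun j _ => h1 j,
      Fin.sum_univ_eq_sum_range (fun i => aseq (i + 1) - aseq i) (n + 1),
      Finset.sum_range_sub aseq, ha0, han]
  have hfab : IntervalIntegrable f volume a b := by
    have := IntervalIntegrable.trans_iterate hint'
    rwa [ha0, han] at this
  have hRHS : (∫ t in a..b, (f t - m)) = (∫ t in a..b, f t) - (b - a) * m := by
    rw [intervalIntegral.integral_sub hfab intervalIntegrable_const,
      intervalIntegral.integral_const, smul_eq_mul]
  rw [hRHS, ← hsumI, ← hsumD, Finset.sum_mul]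
  simp only [neg_sub, mul_sub, Finset.sum_sub_distrib]
  ring
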